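/- Among the thirty-two binary operations d on the three truth values {t, f, ⊤} satisfying d(f, f) = f, d(t, t) = d(t, f) = d(f, t) = t, and d(x, y) ∈ {t, ⊤} for (x, y) ∈ {(t, ⊤), (⊤, t), (⊤, ⊤), (⊤, f), (f, ⊤)}, there is exactly one satisfying, for all x, y: d(x, t) = t, d(x, f) = x, d(x, x) = x, and d(x, y) = d(y, x); namely the operation with d(t, ⊤) = d(⊤, t) = t and d(⊤, ⊤) = d(⊤, f) = d(f, ⊤) = ⊤ (the disjunction of LP^{→,F}). -/
import Mathlib


/-- The three truth values: true, false, both-true-and-false. -/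
inductive TV : Type
  | t : TV
  | f : TV
  | b : TV
  deriving DecidableEq

/-- Formulas of LP^{→,F}: propositional variables, falsity constant,
    negation, conjunction, disjunction, implication. -/
inductive Fm : Type
  | var : ℕ → Fm
  | fls : Fm
  | neg : Fm → Fm
  | conj : Fm → Fm → Fm
  | disj : Fm → Fm → Fm
  | impl : Fm → Fm → Fm
  deriving DecidableEq

/-- The LP^{→,F} negation truth function. -/
def TV.negLP : TV → TV
  | .t => .f
  | .f => .t
  | .b => .b

/-- The LP^{→,F} conjunction truth function. -/
def TV.andLP : TV → TV → TV
  | .f, _ => .f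
  | _, .f => .f
  | .t, .t => .t
  | _, _ => .b

/-- The LP^{→,F} disjunction truth function. -/
def TV.orLP : TV → TV → TV
  | .t, _ => .t
  | _, .t => .t
  | .f, .f => .f
  | _, _ => .b

/-- The LP^{→,F} implication truth function: t if the antecedent is f,
    otherwise the value of the consequent. -/
def TV.implLP : TV → TV → TV
  | .f, _ => .t
  | _, y => y

/-- A valuation for LP^{→,F}. -/
def IsValuation (ν : Fm → TV) : Prop :=
  ν .fls = .f ∧
  (∀ A, ν (.neg A) = (ν A).negLP) ∧
  (∀ A B, ν (.conj A B) = (ν A).andLP (ν B)) ∧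
  (∀ A B, ν (.disj A B) = (ν A).orLP (ν B)) ∧
  (∀ A B, ν (.impl A B) = (ν A).implLP (ν B))

/-- Logical equivalence in LP^{→,F}. -/
def LEquiv (A B : Fm) : Prop := ∀ ν : Fm → TV, IsValuation ν → ν A = ν B

/-- The truth constant T, an abbreviation for ¬F. -/
def Fm.tru : Fm := .neg .fls

/-- A truth value is designated iff it is t or ⊤. -/
def Designated (v : TV) : Prop := v = .t ∨ v = .b

/-- Semantic logical consequence in LP^{→,F}. -/
def LPCons (Γ : Set Fm) (A : Fm) : Prop :=
  ∀ ν : Fm → TV, IsValuation ν → ((∃ B ∈ Γ, ν B = .f) ∨ Designated (ν A))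

/-- Validity in LP^{→,F}. -/
def LPValid (A : Fm) : Prop := ∀ ν : Fm → TV, IsValuation ν → Designated (ν A)

/-- Among the thirty-two disjunction truth tables admitted by the AAZ
    non-deterministic truth table, exactly one satisfies the identity,
    annihilation, idempotent and commutative laws: the LP^{→,F} disjunction. -/
theorem unique_disjunction :
    ∀ d : TV → TV → TV,
      ((d .f .f = .f ∧ d .t .t = .t ∧ d .t .f = .t ∧ d .f .t = .t ∧
        (d .t .b = .t ∨ d .t .b = .b) ∧
        (d .b .t = .t ∨ d .b .t = .b) ∧
        (d .b .b = .t ∨ d .b .b = .b) ∧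
        (d .b .f = .t ∨ d .b .f = .b) ∧
        (d .f .b = .t ∨ d .f .b = .b)) ∧
       ((∀ x, d x .t = .t) ∧ (∀ x, d x .f = x) ∧
        (∀ x, d x x = x) ∧ (∀ x y, d x y = d y x)))
      ↔ d = TV.orLP := by
  intro d
  constructor
  · rintro ⟨_, ⟨ht, hf, hid, hc⟩⟩
    funext x y
    have h1 := ht TV.t; have h2 := ht TV.f; have h3 := ht TV.b
    have h4 := hf TV.t; have h5 := hf TV.f; have h6 := hf TV.b
    have h7 := hid TV.b
    have h8 := hc TV.f TV.b
    cases x <;> cases y <;>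
      simp_all [TV.orLP] <;> first | rfl | (rw [hc]; assumption)
  · rintro rfl
    refine ⟨⟨rfl, rfl, rfl, rfl, Or.inl rfl, Or.inl rfl, Or.inr rfl, Or.inr rfl, Or.inr rfl⟩,
      fun x => by cases x <;> rfl, fun x => by cases x <;> rfl,
      fun x => by cases x <;> rfl, fun x y => by cases x <;> cases y <;> rfl⟩
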